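/- arXiv:1804.04949 — 2 statements merged into one kernel-verified Lean document; each statement's English description precedes it below -/
import Mathlib

section
/- Let U be a finite-dimensional real vector space and let D be a subspace of U × U*. Then D equals its orthogonal D^⊥ with respect to the canonical pairing if and only if the following two conditions hold: ⟨⟨(u₁,α₁),(u₂,α₂)⟩⟩ = 0 for all (u₁,α₁),(u₂,α₂) ∈ D, and dim D = dim U. -/
/-- The canonical symmetric pairing `⟪(u₁,α₁),(u₂,α₂)⟫ = α₁(u₂) + α₂(u₁)`
on `U ⊕ U*`, as a bilinear form. -/
noncomputable def diracPairing (U : Type*) [AddCommGroup U] [Module ℝ U] :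
    LinearMap.BilinForm ℝ (U × Module.Dual ℝ U) :=
  LinearMap.mk₂ ℝ (fun x y => x.2 y.1 + y.2 x.1)
    (by intro m₁ m₂ n; simp; ring)
    (by intro c m n; simp; ring)
    (by intro m n₁ n₂; simp; ring)
    (by intro c m n; simp; ring)

/-- The orthogonal complement of a subspace `D ⊆ U ⊕ U*` with respect to the
canonical pairing. -/
noncomputable def diracOrthogonal (U : Type*) [AddCommGroup U] [Module ℝ U]
    (D : Submodule ℝ (U × Module.Dual ℝ U)) : Submodule ℝ (U × Module.Dual ℝ U) :=
  LinearMap.BilinForm.orthogonal (diracPairing U) D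

/-!
For a nondegenerate form `dim W + dim W^⊥ = dim V`, so an isotropic subspace (`W ≤ W^⊥`) equals
`W^⊥` exactly when `2 dim W = dim V`. The canonical pairing on `U × U*` is nondegenerate, and
`dim (U × U*) = 2 dim U`.
-/

namespace LinearMap.BilinForm

open Module

variable {K V : Type*} [Field K] [AddCommGroup V] [Module K V]

theorem le_orthogonal_self_iff {B : LinearMap.BilinForm K V} {W : Submodule K V} :
    W ≤ B.orthogonal W ↔ ∀ x ∈ W, ∀ y ∈ W, B x y = 0 :=
  ⟨fun h x hx _ hy => h hy x hx, fun h y hy x hx => h x hx y hy⟩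

theorem eq_orthogonal_self_iff [FiniteDimensional K V] {B : LinearMap.BilinForm K V}
    (hB : B.Nondegenerate) (W : Submodule K V) :
    W = B.orthogonal W ↔ (∀ x ∈ W, ∀ y ∈ W, B x y = 0) ∧ 2 * finrank K W = finrank K V := by
  have hdim := finrank_orthogonal hB W
  have hle := W.finrank_le
  constructor
  · intro hW
    have hW' : finrank K W = finrank K (B.orthogonal W) :=
      congrArg (fun S : Submodule K V => finrank K S) hW
    exact ⟨le_orthogonal_self_iff.1 hW.le, by omega⟩
  · rintro ⟨hiso, hW⟩
    exact Submodule.eq_of_le_of_finrank_le (le_orthogonal_self_iff.2 hiso) (by omega)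

end LinearMap.BilinForm

section Dirac

variable (U : Type*) [AddCommGroup U] [Module ℝ U]

theorem diracPairing_apply (x y : U × Module.Dual ℝ U) :
    diracPairing U x y = x.2 y.1 + y.2 x.1 :=
  rfl

theorem diracPairing_isSymm : (diracPairing U).IsSymm :=
  ⟨fun x y => by simp only [diracPairing_apply]; ring⟩

theorem diracPairing_nondegenerate : (diracPairing U).Nondegenerate := by
  refine (diracPairing_isSymm U).isRefl.nondegenerate_iff_separatingLeft.2 fun x hx => ?_
  have hα : x.2 = 0 := LinearMap.ext fun u => by simpa [diracPairing_apply] using hx (u, 0)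
  have hu : x.1 = 0 := (Module.forall_dual_apply_eq_zero_iff ℝ x.1).1 fun β => by
    simpa [diracPairing_apply] using hx (0, β)
  exact Prod.ext hu hα

end Dirac

/-- A subspace `D ⊆ U ⊕ U*` satisfies `D = D^⊥` (i.e. is a linear Dirac
structure) if and only if the pairing vanishes identically on `D` and `dim D = dim U`. -/
theorem dirac_structure_iff_isotropic_and_dim
    (U : Type*) [AddCommGroup U] [Module ℝ U] [FiniteDimensional ℝ U]
    (D : Submodule ℝ (U × Module.Dual ℝ U)) :
    D = diracOrthogonal U D ↔
      ((∀ x ∈ D, ∀ y ∈ D, diracPairing U x y = 0) ∧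
        Module.finrank ℝ D = Module.finrank ℝ U) := by
  rw [diracOrthogonal,
    LinearMap.BilinForm.eq_orthogonal_self_iff (diracPairing_nondegenerate U),
    Module.finrank_prod, Subspace.dual_finrank_eq]
  exact and_congr_right' (by omega)
end

section
/- Let φ : U → V be a linear map between finite-dimensional real vector spaces and let D_U ⊆ U × U* be a linear Dirac structure on U. Then the forward image F_φ(D_U) = {(φ(u), β) | u ∈ U, β ∈ V*, (u, β ∘ φ) ∈ D_U} is a linear Dirac structure on V. -/
/-- The forward image `F_φ(D_U) = {(φ(u), β) | u ∈ U, β ∈ V*, (u, β ∘ φ) ∈ D_U}`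
of a subspace `D_U ⊆ U ⊕ U*` under a linear map `φ : U → V`. -/
noncomputable def forwardImage {U V : Type*} [AddCommGroup U] [Module ℝ U]
    [AddCommGroup V] [Module ℝ V] (φ : U →ₗ[ℝ] V)
    (D : Submodule ℝ (U × Module.Dual ℝ U)) : Submodule ℝ (V × Module.Dual ℝ V) where
  carrier := {p | ∃ u : U, p.1 = φ u ∧ (u, p.2.comp φ) ∈ D}
  add_mem' := by
    rintro ⟨v₁, β₁⟩ ⟨v₂, β₂⟩ ⟨u₁, h₁, hD₁⟩ ⟨u₂, h₂, hD₂⟩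
    refine ⟨u₁ + u₂, by simp at h₁ h₂; simp [h₁, h₂], ?_⟩
    simpa [LinearMap.add_comp] using D.add_mem hD₁ hD₂
  zero_mem' := ⟨0, by simp, by simp; exact D.zero_mem⟩
  smul_mem' := by
    rintro c ⟨v, β⟩ ⟨u, h, hD⟩
    refine ⟨c • u, by simp at h; simp [h], ?_⟩
    simpa [LinearMap.smul_comp] using D.smul_mem c hD

/-!
A Lagrangian `D ⊆ U ⊕ U*` is controlled by its kernel `K = {u | (u, 0) ∈ D}` and its range
`S = {α | ∃ u, (u, α) ∈ D}`: `D = D^⊥` makes `K` the annihilator of `S`, hence `S` the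
annihilator of `K` when `U` is finite-dimensional. Let `(v, β)` be orthogonal to the forward
image. Since `β ∘ φ` kills `K`, some `(u₁, β ∘ φ)` lies in `D`. Every `γ` killing `φ(K)` has
`γ ∘ φ ∈ S`, and then isotropy of `D` gives `γ (v - φ u₁) = 0`; so `v - φ u₁ ∈ φ(K)`, and
correcting `u₁` by its preimage in `K` puts `(v, β)` in the forward image.
-/

open Submodule LinearMap

section Dirac

variable {U V : Type*} [AddCommGroup U] [Module ℝ U] [AddCommGroup V] [Module ℝ V]

theorem mem_diracOrthogonal {D : Submodule ℝ (U × Module.Dual ℝ U)} {y : U × Module.Dual ℝ U} :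
    y ∈ diracOrthogonal U D ↔ ∀ x ∈ D, x.2 y.1 + y.2 x.1 = 0 :=
  Iff.rfl

theorem comap_inl_diracOrthogonal (D : Submodule ℝ (U × Module.Dual ℝ U)) :
    (diracOrthogonal U D).comap (inl ℝ U (Module.Dual ℝ U)) =
      (D.map (snd ℝ U (Module.Dual ℝ U))).dualCoannihilator := by
  ext u
  simpa [mem_diracOrthogonal] using forall_comm

theorem map_snd_eq_dualAnnihilator_comap_inl [FiniteDimensional ℝ U]
    {D : Submodule ℝ (U × Module.Dual ℝ U)} (hD : D = diracOrthogonal U D) :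
    D.map (snd ℝ U (Module.Dual ℝ U)) =
      (D.comap (inl ℝ U (Module.Dual ℝ U))).dualAnnihilator := by
  conv_rhs => rw [hD, comap_inl_diracOrthogonal]
  exact Subspace.dualCoannihilator_dualAnnihilator_eq.symm

theorem forwardImage_le_diracOrthogonal (φ : U →ₗ[ℝ] V) {D : Submodule ℝ (U × Module.Dual ℝ U)}
    (hD : D ≤ diracOrthogonal U D) :
    forwardImage φ D ≤ diracOrthogonal V (forwardImage φ D) := by
  rintro ⟨v₂, β₂⟩ ⟨u₂, rfl, hu₂⟩ ⟨v₁, β₁⟩ ⟨u₁, rfl, hu₁⟩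
  exact mem_diracOrthogonal.mp (hD hu₂) _ hu₁

theorem mem_diracOrthogonal_forwardImage {φ : U →ₗ[ℝ] V} {D : Submodule ℝ (U × Module.Dual ℝ U)}
    {y : V × Module.Dual ℝ V} :
    y ∈ diracOrthogonal V (forwardImage φ D) ↔
      ∀ u (γ : Module.Dual ℝ V), (u, γ.comp φ) ∈ D → γ y.1 + y.2 (φ u) = 0 := by
  refine ⟨fun hy u γ hu => hy (φ u, γ) ⟨u, rfl, hu⟩, ?_⟩
  rintro hy ⟨_, γ⟩ ⟨u, rfl, hu⟩
  exact hy u γ hu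

theorem diracOrthogonal_forwardImage_le [FiniteDimensional ℝ U] (φ : U →ₗ[ℝ] V)
    {D : Submodule ℝ (U × Module.Dual ℝ U)} (hD : D = diracOrthogonal U D) :
    diracOrthogonal V (forwardImage φ D) ≤ forwardImage φ D := by
  rintro ⟨v, β⟩ hvβ
  have hortho := mem_diracOrthogonal_forwardImage.mp hvβ
  set K := D.comap (inl ℝ U (Module.Dual ℝ U))
  have hS := map_snd_eq_dualAnnihilator_comap_inl hD
  obtain ⟨⟨u₁, _⟩, hu₁, rfl⟩ : β.comp φ ∈ D.map (snd ℝ U (Module.Dual ℝ U)) := by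
    rw [hS, mem_dualAnnihilator]
    intro w hw
    simpa using hortho w 0 (by simpa using hw)
  obtain ⟨w, hw, hφw⟩ : v - φ u₁ ∈ K.map φ := by
    rw [← Subspace.dualAnnihilator_dualCoannihilator_eq (W := K.map φ), mem_dualCoannihilator]
    intro γ hγ
    obtain ⟨⟨u, _⟩, hu, rfl⟩ : γ.comp φ ∈ D.map (snd ℝ U (Module.Dual ℝ U)) := by
      rw [hS, mem_dualAnnihilator]
      exact fun w hw => (mem_dualAnnihilator γ).mp hγ (φ w) (mem_map_of_mem hw)
    have hisotropic := mem_diracOrthogonal.mp (hD.le hu₁) _ hu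
    have horthoγ := hortho u γ hu
    simp only [comp_apply] at hisotropic
    rw [map_sub]
    linarith
  refine ⟨u₁ + w, by simp [hφw], ?_⟩
  simpa using D.add_mem hu₁ (mem_comap.mp hw)

end Dirac

theorem forward_of_dirac_is_dirac_general
    {U V : Type*} [AddCommGroup U] [Module ℝ U] [FiniteDimensional ℝ U]
    [AddCommGroup V] [Module ℝ V]
    (φ : U →ₗ[ℝ] V) (DU : Submodule ℝ (U × Module.Dual ℝ U))
    (hDU : DU = diracOrthogonal U DU) :
    forwardImage φ DU = diracOrthogonal V (forwardImage φ DU) :=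
  le_antisymm (forwardImage_le_diracOrthogonal φ hDU.le) (diracOrthogonal_forwardImage_le φ hDU)

/-- The forward image of a linear Dirac structure under a linear map
between finite-dimensional real vector spaces is a linear Dirac structure. -/
theorem forward_of_dirac_is_dirac
    {U V : Type*} [AddCommGroup U] [Module ℝ U] [FiniteDimensional ℝ U]
    [AddCommGroup V] [Module ℝ V] [FiniteDimensional ℝ V]
    (φ : U →ₗ[ℝ] V) (DU : Submodule ℝ (U × Module.Dual ℝ U))
    (hDU : DU = diracOrthogonal U DU) :
    forwardImage φ DU = diracOrthogonal V (forwardImage φ DU) :=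
  forward_of_dirac_is_dirac_general φ DU hDU
end
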